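/- arXiv:math/0205172 — 2 statements merged into one kernel-verified Lean document; each statement's English description precedes it below -/
import Mathlib

section
/- Let (X_n) be an expander of degree d and conductance c > 0, and let f_n : X_n → ℓ² be a sequence of 1-Lipschitz maps (with respect to the graph metrics) satisfying ∑_{x∈X_n} f_n(x) = 0 for every n. Then there exists R > 0 such that for all n, the number of vertices x ∈ X_n with ‖f_n(x)‖ ≤ R is strictly greater than |X_n|/2. -/
open Classical in
/-- The degree of a vertex `v` in a finite simple graph. -/
noncomputable def gdeg {V : Type*} [Fintype V] (G : SimpleGraph V) (v : V) : ℕ :=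
  (Finset.univ.filter fun w => G.Adj v w).card

open Classical in
/-- The boundary `∂A = {x : dist(x, A) = 1}` of a set of vertices `A`: the set of
vertices not in `A` that are adjacent to a vertex of `A`. -/
noncomputable def graphBoundary {V : Type*} [Fintype V] (G : SimpleGraph V)
    (A : Finset V) : Finset V :=
  Finset.univ.filter fun x => x ∉ A ∧ ∃ a ∈ A, G.Adj x a

/-- An expander of degree `d` and conductance `c`: a sequence of finite connected
`d`-regular graphs whose cardinalities tend to infinity, such that every set `A`
of at most half the vertices satisfies `|∂A| ≥ c·|A|`. -/
structure Expander (d : ℕ) (c : ℝ) where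
  V : ℕ → Type
  [fintype : ∀ n, Fintype (V n)]
  G : ∀ n, SimpleGraph (V n)
  connected : ∀ n, (G n).Connected
  regular : ∀ (n : ℕ) (v : V n), gdeg (G n) v = d
  card_tendsto : Filter.Tendsto (fun n => Fintype.card (V n)) Filter.atTop Filter.atTop
  expansion : ∀ (n : ℕ) (A : Finset (V n)),
    (A.card : ℝ) ≤ (Fintype.card (V n) : ℝ) / 2 →
    c * A.card ≤ ((graphBoundary (G n) A).card : ℝ)

attribute [instance] Expander.fintype

open Classical in
/-- The finset of unordered pairs of distinct vertices. -/
noncomputable def offDiagPairs (V : Type*) [Fintype V] : Finset (Sym2 V) :=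
  Finset.univ.filter fun e => ¬ e.IsDiag

/-- The squared distance `‖f x − f y‖²` as a function of the unordered pair `{x, y}`. -/
noncomputable def sqDistFun {V H : Type*} [NormedAddCommGroup H] (f : V → H) :
    Sym2 V → ℝ :=
  Sym2.lift ⟨fun x y => ‖f x - f y‖ ^ 2, fun x y => by show ‖f x - f y‖ ^ 2 = ‖f y - f x‖ ^ 2; rw [norm_sub_rev]⟩

/-- `∑_{{x,y} ∈ P} ‖f x − f y‖²`, summed over unordered pairs of distinct vertices. -/
noncomputable def pairSqSum {V : Type*} [Fintype V] {H : Type*} [NormedAddCommGroup H]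
    (f : V → H) : ℝ :=
  ∑ e ∈ offDiagPairs V, sqDistFun f e

open Classical in
/-- `∑_{{x,y} ∈ E} ‖f x − f y‖²`, summed over the edges of `G`. -/
noncomputable def edgeSqSum {V : Type*} [Fintype V] (G : SimpleGraph V)
    {H : Type*} [NormedAddCommGroup H] (f : V → H) : ℝ :=
  ∑ e ∈ G.edgeFinset, sqDistFun f e

open Classical in
/-- The number of edges of a finite simple graph. -/
noncomputable def edgeCount {V : Type*} [Fintype V] (G : SimpleGraph V) : ℕ :=
  G.edgeFinset.card

/-!
An expander satisfies a discrete Poincaré inequality: for mean-zero `g : V → ℝ`,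
`c² ∑ g² ≤ 4d ∑_{darts} (g x - g y)²`. It comes from the coarea (Cheeger) inequality
`c ∑ w ≤ ∑_{darts} (w x - w y)⁺` for `w ≥ 0` supported on at most half of the vertices, applied
with Cauchy–Schwarz to the squares of the positive and negative parts of `g` about a median.
Taking coordinates in an orthonormal basis of the span of the values, the inequality holds
verbatim for maps into a Hilbert space. For a `1`-Lipschitz mean-zero `f` its right side is at
most `4d²|V|`, so `∑ ‖f x‖² ≤ (4d²/c²)|V|`, and Markov's inequality puts more than half of the
vertices in the ball of radius `√(8d²/c² + 1)`.
-/

open Finset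

theorem exists_median {V α : Type*} [Fintype V] [Nonempty V] [LinearOrder α] (g : V → α) :
    ∃ M, 2 * #{x | M < g x} ≤ Fintype.card V ∧ 2 * #{x | g x < M} ≤ Fintype.card V := by
  classical
  set T : Finset V := {x | 2 * #{y | g y < g x} ≤ Fintype.card V}
  have hT : T.Nonempty := by
    obtain ⟨x, -, hx⟩ := univ.exists_min_image g univ_nonempty
    refine ⟨x, mem_filter.mpr ⟨mem_univ _, ?_⟩⟩
    rw [card_eq_zero.mpr (filter_eq_empty_iff.mpr fun y _ => not_lt.mpr (hx y (mem_univ _)))]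
    omega
  obtain ⟨x₀, hx₀T, hx₀⟩ := T.exists_max_image g hT
  refine ⟨g x₀, ?_, (mem_filter.mp hx₀T).2⟩
  by_contra! hbig
  obtain ⟨x₁, hx₁, hmin⟩ :=
    exists_min_image {x | g x₀ < g x} g (card_pos.mp (by omega))
  have hsub : ({y | g y < g x₁} : Finset V) ⊆ ({y | ¬ g x₀ < g y} : Finset V) := by
    intro y hy
    simp only [mem_filter, mem_univ, true_and] at hy ⊢
    exact fun h => (hmin y (by simpa using h)).not_gt hy
  have hcompl := card_filter_add_card_filter_not (s := univ) (fun y => g x₀ < g y)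
  have hx₁T : x₁ ∈ T := mem_filter.mpr ⟨mem_univ _, by
    have := card_le_card hsub
    rw [card_univ] at hcompl
    omega⟩
  exact (hx₀ x₁ hx₁T).not_gt (mem_filter.mp hx₁).2

lemma sum_sq_le_sum_sub_sq {V : Type*} [Fintype V] {g : V → ℝ} (hg : ∑ x, g x = 0) (M : ℝ) :
    ∑ x, g x ^ 2 ≤ ∑ x, (g x - M) ^ 2 := by
  have : ∑ x, (g x - M) ^ 2 = ∑ x, g x ^ 2 - 2 * M * ∑ x, g x + Fintype.card V * M ^ 2 := calc
    _ = ∑ x, (g x ^ 2 - 2 * M * g x + M ^ 2) := sum_congr rfl fun x _ => by ring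
    _ = _ := by
      rw [sum_add_distrib, sum_sub_distrib, ← mul_sum, sum_const, card_univ, nsmul_eq_mul]
  rw [this, hg, mul_zero, sub_zero, le_add_iff_nonneg_right]
  positivity

lemma max_sub_zero_sq_add_max_sub_zero_sq (a M : ℝ) :
    max (a - M) 0 ^ 2 + max (M - a) 0 ^ 2 = (a - M) ^ 2 := by
  rcases le_total a M with h | h
  · rw [max_eq_right (by linarith), max_eq_left (by linarith)]
    ring
  · rw [max_eq_left (by linarith), max_eq_right (by linarith)]
    ring

lemma sub_max_sub_zero_sq_add_le (a b M : ℝ) :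
    (max (a - M) 0 - max (b - M) 0) ^ 2 + (max (M - a) 0 - max (M - b) 0) ^ 2 ≤ (a - b) ^ 2 := by
  rcases le_total a M with ha | ha <;> rcases le_total b M with hb | hb <;>
    simp only [max_eq_left, max_eq_right, sub_nonneg, sub_nonpos, ha, hb] <;>
    nlinarith

lemma half_card_lt_card_filter_le {V : Type*} [Fintype V] [Nonempty V] (h : V → ℝ) {K R : ℝ}
    (hR : 0 ≤ R) (hKR : 2 * K < R ^ 2) (hsum : ∑ x, h x ^ 2 ≤ K * Fintype.card V) :
    (Fintype.card V : ℝ) / 2 < #{x | h x ≤ R} := by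
  have hfar : (#{x | ¬ h x ≤ R} : ℝ) * R ^ 2 ≤ K * Fintype.card V := calc
    (#{x | ¬ h x ≤ R} : ℝ) * R ^ 2 = ∑ x ∈ {x | ¬ h x ≤ R}, R ^ 2 := by
      rw [sum_const, nsmul_eq_mul]
    _ ≤ ∑ x ∈ {x | ¬ h x ≤ R}, h x ^ 2 := sum_le_sum fun x hx => by
      have := not_le.mp (mem_filter.mp hx).2
      nlinarith
    _ ≤ ∑ x, h x ^ 2 := sum_le_sum_of_subset_of_nonneg (subset_univ _) fun x _ _ => sq_nonneg _
    _ ≤ K * Fintype.card V := hsum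
  have hsplit : (#{x | h x ≤ R} : ℝ) + #{x | ¬ h x ≤ R} = Fintype.card V := by
    exact_mod_cast card_filter_add_card_filter_not (s := univ) (fun x => h x ≤ R)
  have hpos : (0 : ℝ) < Fintype.card V := mod_cast Fintype.card_pos
  nlinarith [sq_nonneg R]

section InnerProductSpace

variable {E : Type*} [NormedAddCommGroup E] [InnerProductSpace ℝ E]

lemma OrthonormalBasis.norm_sq_eq_sum_inner_sq {K : Submodule ℝ E} {ι : Type*} [Fintype ι]
    (b : OrthonormalBasis ι ℝ K) {v : E} (hv : v ∈ K) :
    ‖v‖ ^ 2 = ∑ i, inner ℝ (b i : E) v ^ 2 := by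
  simpa [Real.norm_eq_abs, sq_abs] using (b.sum_sq_norm_inner_right ⟨v, hv⟩).symm

theorem sum_norm_sq_le_of_forall_real {V α : Type*} [Fintype V] [Fintype α] (p q : α → V)
    {A B : ℝ} (h : ∀ g : V → ℝ, ∑ x, g x = 0 →
      A * ∑ x, g x ^ 2 ≤ B * ∑ a, (g (p a) - g (q a)) ^ 2)
    (f : V → E) (hf : ∑ x, f x = 0) :
    A * ∑ x, ‖f x‖ ^ 2 ≤ B * ∑ a, ‖f (p a) - f (q a)‖ ^ 2 := by
  set K := Submodule.span ℝ (Set.range f)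
  have hmem (x : V) : f x ∈ K := Submodule.subset_span ⟨x, rfl⟩
  have : FiniteDimensional ℝ K := FiniteDimensional.span_of_finite ℝ (Set.finite_range f)
  set b := stdOrthonormalBasis ℝ K
  calc A * ∑ x, ‖f x‖ ^ 2 = ∑ i, A * ∑ x, inner ℝ (b i : E) (f x) ^ 2 := by
        simp only [b.norm_sq_eq_sum_inner_sq (hmem _)]
        rw [sum_comm, mul_sum]
    _ ≤ ∑ i, B * ∑ a, (inner ℝ (b i : E) (f (p a)) - inner ℝ (b i : E) (f (q a))) ^ 2 :=
        sum_le_sum fun i _ => h _ (by rw [← inner_sum, hf, inner_zero_right])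
    _ = B * ∑ a, ‖f (p a) - f (q a)‖ ^ 2 := by
        simp only [b.norm_sq_eq_sum_inner_sq (sub_mem (hmem _) (hmem _)), inner_sub_right]
        rw [sum_comm, mul_sum]

end InnerProductSpace

namespace SimpleGraph

variable {V : Type*} [Fintype V] {G : SimpleGraph V} [DecidableRel G.Adj]

lemma isRegularOfDegree_of_gdeg {d : ℕ} (h : ∀ v, gdeg G v = d) : G.IsRegularOfDegree d := by
  intro v
  rw [← h v, gdeg, ← card_neighborFinset_eq_degree, neighborFinset_eq_filter]
  congr

lemma sum_dart_fst {d : ℕ} (hG : G.IsRegularOfDegree d) (F : V → ℝ) :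
    ∑ e : G.Dart, F e.fst = d * ∑ v, F v := by
  classical
  rw [← Finset.sum_fiberwise univ (fun e : G.Dart => e.fst), mul_sum]
  refine sum_congr rfl fun v _ => ?_
  rw [sum_congr rfl fun e he => by rw [(mem_filter.mp he).2], sum_const,
    G.dart_fst_fiber_card_eq_degree v, hG v, nsmul_eq_mul]

lemma sum_dart_swap (F : V → V → ℝ) :
    ∑ e : G.Dart, F e.snd e.fst = ∑ e : G.Dart, F e.fst e.snd :=
  Equiv.sum_comp (Dart.symm_involutive.toPerm _) fun e => F e.fst e.snd

lemma sum_dart_snd {d : ℕ} (hG : G.IsRegularOfDegree d) (F : V → ℝ) :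
    ∑ e : G.Dart, F e.snd = d * ∑ v, F v :=
  (sum_dart_swap fun x _ => F x).trans (sum_dart_fst hG F)

lemma sum_dart_add_sq_le {d : ℕ} (hG : G.IsRegularOfDegree d) (u : V → ℝ) :
    ∑ e : G.Dart, (u e.fst + u e.snd) ^ 2 ≤ 4 * d * ∑ x, u x ^ 2 := by
  calc ∑ e : G.Dart, (u e.fst + u e.snd) ^ 2
      ≤ ∑ e : G.Dart, (2 * u e.fst ^ 2 + 2 * u e.snd ^ 2) :=
        sum_le_sum fun e _ => by nlinarith [sq_nonneg (u e.fst - u e.snd)]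
    _ = 4 * d * ∑ x, u x ^ 2 := by
        rw [sum_add_distrib, ← mul_sum, ← mul_sum, sum_dart_fst hG fun x => u x ^ 2,
          sum_dart_snd hG fun x => u x ^ 2]
        ring

lemma sum_dart_norm_sub_sq_le {E : Type*} [SeminormedAddCommGroup E] {d : ℕ}
    (hG : G.IsRegularOfDegree d) (f : V → E) (hf : ∀ x y, G.Adj x y → ‖f x - f y‖ ≤ 1) :
    ∑ e : G.Dart, ‖f e.fst - f e.snd‖ ^ 2 ≤ d * Fintype.card V := calc
  ∑ e : G.Dart, ‖f e.fst - f e.snd‖ ^ 2 ≤ ∑ _e : G.Dart, (1 : ℝ) :=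
    sum_le_sum fun e _ => pow_le_one₀ (norm_nonneg _) (hf _ _ e.adj)
  _ = d * Fintype.card V := by simpa using sum_dart_fst hG fun _ => (1 : ℝ)

lemma card_graphBoundary_le_card_dart_out [DecidableEq V] (A : Finset V) :
    #(graphBoundary G A) ≤ #{e : G.Dart | e.fst ∈ A ∧ e.snd ∉ A} := by
  refine card_le_card_of_surjOn (fun e => e.snd) fun x hx => ?_
  simp only [graphBoundary, coe_filter, mem_univ, true_and, Set.mem_ofPred_eq] at hx
  obtain ⟨hxA, a, haA, hxa⟩ := hx
  exact ⟨⟨(a, x), hxa.symm⟩, by simp [haA, hxA], rfl⟩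

def HasExpansion (G : SimpleGraph V) (c : ℝ) : Prop :=
  ∀ A : Finset V, (#A : ℝ) ≤ Fintype.card V / 2 → c * #A ≤ #(graphBoundary G A)

lemma HasExpansion.le_card_dart_out [DecidableEq V] {c : ℝ} (hG : G.HasExpansion c)
    {A : Finset V} (hA : (#A : ℝ) ≤ Fintype.card V / 2) :
    c * #A ≤ #{e : G.Dart | e.fst ∈ A ∧ e.snd ∉ A} :=
  (hG A hA).trans (mod_cast card_graphBoundary_le_card_dart_out A)

lemma sum_dart_max_sub_zero_eq_add_card_dart_out [DecidableEq V] (w : V → ℝ) (S : Finset V)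
    {t : ℝ} (ht : 0 ≤ t) (hS : ∀ x ∈ S, t ≤ w x) (hSc : ∀ x ∉ S, w x = 0) :
    ∑ e : G.Dart, max (w e.fst - w e.snd) 0 =
      ∑ e : G.Dart, max ((if e.fst ∈ S then w e.fst - t else 0) -
        (if e.snd ∈ S then w e.snd - t else 0)) 0 +
      t * #{e : G.Dart | e.fst ∈ S ∧ e.snd ∉ S} := by
  rw [card_eq_sum_ones, Nat.cast_sum, mul_sum, sum_filter, ← sum_add_distrib]
  refine sum_congr rfl fun e _ => ?_
  by_cases hx : e.fst ∈ S <;> by_cases hy : e.snd ∈ S <;>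
    simp only [hx, hy, hSc, if_true, if_false, and_true, and_false, not_true, not_false_eq_true,
      Nat.cast_one, mul_one, add_zero]
  · ring_nf
  · have := hS _ hx
    rw [max_eq_left (by linarith), max_eq_left (by linarith)]
    ring
  · have := hS _ hy
    rw [max_eq_right (by linarith), max_eq_right (by linarith)]

/-- Induction on the support `S` of `w`: subtracting the minimum `t` of `w` on `S` shrinks the
support, lowers the left side by `t c #S` and the right side by `t` times the number of darts
leaving `S`. -/
theorem HasExpansion.mul_sum_le_sum_dart_max_sub_zero {c : ℝ} (hG : G.HasExpansion c)
    (w : V → ℝ) (hw : ∀ x, 0 ≤ w x)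
    (hsupp : (#{x | w x ≠ 0} : ℝ) ≤ Fintype.card V / 2) :
    c * ∑ x, w x ≤ ∑ e : G.Dart, max (w e.fst - w e.snd) 0 := by
  classical
  induction hN : #{x | w x ≠ 0} using Nat.strong_induction_on generalizing w with
  | _ N ih =>
    set S : Finset V := {x | w x ≠ 0}
    have hSc : ∀ x ∉ S, w x = 0 := fun x hx => by simpa [S] using hx
    rcases S.eq_empty_or_nonempty with hS | hS
    · have hzero : ∀ x, w x = 0 := fun x => hSc x (by simp [hS])
      simp only [hzero, sub_self, max_self, sum_const_zero, mul_zero, le_refl]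
    obtain ⟨x₀, hx₀S, hx₀⟩ := S.exists_min_image w hS
    have ht : 0 < w x₀ := (hw x₀).lt_of_ne' (mem_filter.mp hx₀S).2
    set w' : V → ℝ := fun x => if x ∈ S then w x - w x₀ else 0
    have hw' : ∀ x, 0 ≤ w' x := fun x => by
      by_cases hx : x ∈ S <;> simp [w', hx, hx₀ x]
    have hsupp' : ({x | w' x ≠ 0} : Finset V) ⊆ S.erase x₀ := fun x hx => by
      by_cases hxS : x ∈ S
      · refine mem_erase.mpr ⟨fun h => ?_, hxS⟩
        simp [w', h, hx₀S] at hx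
      · simp [w', hxS] at hx
    have hcard' : #{x | w' x ≠ 0} ≤ #S - 1 :=
      (card_le_card hsupp').trans_eq (card_erase_of_mem hx₀S)
    have hIH := ih _ (by have := hS.card_pos; omega) w' hw'
      (le_trans (mod_cast hcard'.trans (Nat.sub_le _ _)) hsupp) rfl
    have hsum : ∑ x, w x = ∑ x, w' x + w x₀ * #S := calc
      ∑ x, w x = ∑ x, (w' x + if x ∈ S then w x₀ else 0) :=
        sum_congr rfl fun x _ => by by_cases hx : x ∈ S <;> simp [w', hx, hSc]
      _ = _ := by simp [sum_add_distrib, mul_comm]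
    rw [sum_dart_max_sub_zero_eq_add_card_dart_out w S ht.le hx₀ hSc, hsum]
    linarith [mul_le_mul_of_nonneg_left (hG.le_card_dart_out hsupp) ht.le]

/-- Cheeger's argument: the coarea inequality for `u²`, then Cauchy–Schwarz. -/
theorem HasExpansion.sq_mul_sum_sq_le_of_nonneg {c : ℝ} {d : ℕ} (hG : G.HasExpansion c)
    (hc : 0 ≤ c) (hreg : G.IsRegularOfDegree d) (u : V → ℝ) (hu : ∀ x, 0 ≤ u x)
    (hsupp : (#{x | u x ≠ 0} : ℝ) ≤ Fintype.card V / 2) :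
    c ^ 2 * ∑ x, u x ^ 2 ≤ 4 * d * ∑ e : G.Dart, (u e.fst - u e.snd) ^ 2 := by
  set s := ∑ x, u x ^ 2
  set Q := ∑ e : G.Dart, (u e.fst - u e.snd) ^ 2
  have hcoarea : c * s ≤ ∑ e : G.Dart, |u e.fst - u e.snd| * (u e.fst + u e.snd) := by
    refine (hG.mul_sum_le_sum_dart_max_sub_zero (fun x => u x ^ 2) (fun x => sq_nonneg _)
      (by simpa only [ne_eq, pow_eq_zero_iff two_ne_zero] using hsupp)).trans
      (sum_le_sum fun e _ =>
        max_le ?_ (mul_nonneg (abs_nonneg _) (add_nonneg (hu _) (hu _))))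
    rw [show u e.fst ^ 2 - u e.snd ^ 2 = (u e.fst - u e.snd) * (u e.fst + u e.snd) by ring]
    exact mul_le_mul_of_nonneg_right (le_abs_self _) (add_nonneg (hu _) (hu _))
  have hcs : (∑ e : G.Dart, |u e.fst - u e.snd| * (u e.fst + u e.snd)) ^ 2 ≤
      Q * ∑ e : G.Dart, (u e.fst + u e.snd) ^ 2 := by
    simpa only [sq_abs] using sum_mul_sq_le_sq_mul_sq univ
      (fun e : G.Dart => |u e.fst - u e.snd|) (fun e => u e.fst + u e.snd)
  have hQ : 0 ≤ Q := sum_nonneg fun e _ => sq_nonneg _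
  have hkey : (c * s) ^ 2 ≤ 4 * d * Q * s := calc
    (c * s) ^ 2 ≤ (∑ e : G.Dart, |u e.fst - u e.snd| * (u e.fst + u e.snd)) ^ 2 :=
      pow_le_pow_left₀ (by positivity) hcoarea 2
    _ ≤ Q * (4 * d * s) := hcs.trans (mul_le_mul_of_nonneg_left (sum_dart_add_sq_le hreg u) hQ)
    _ = 4 * d * Q * s := by ring
  have hs : 0 ≤ s := sum_nonneg fun x _ => sq_nonneg (u x)
  rcases hs.eq_or_lt with hs | hs
  · rw [← hs, mul_zero]
    exact mul_nonneg (by positivity) hQ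
  · nlinarith

theorem HasExpansion.sq_mul_sum_sq_le [Nonempty V] {c : ℝ} {d : ℕ} (hG : G.HasExpansion c)
    (hc : 0 ≤ c) (hreg : G.IsRegularOfDegree d) (g : V → ℝ) (hg : ∑ x, g x = 0) :
    c ^ 2 * ∑ x, g x ^ 2 ≤ 4 * d * ∑ e : G.Dart, (g e.fst - g e.snd) ^ 2 := by
  obtain ⟨M, hM_above, hM_below⟩ := exists_median g
  have hhalf {k : ℕ} (hk : 2 * k ≤ Fintype.card V) : (k : ℝ) ≤ Fintype.card V / 2 := by
    rw [le_div_iff₀ two_pos]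
    exact_mod_cast (by omega : k * 2 ≤ Fintype.card V)
  have hupper := hG.sq_mul_sum_sq_le_of_nonneg hc hreg (fun x => max (g x - M) 0)
    (fun x => le_max_right _ _) (by simpa using hhalf hM_above)
  have hlower := hG.sq_mul_sum_sq_le_of_nonneg hc hreg (fun x => max (M - g x) 0)
    (fun x => le_max_right _ _) (by simpa using hhalf hM_below)
  calc c ^ 2 * ∑ x, g x ^ 2 ≤ c ^ 2 * ∑ x, (g x - M) ^ 2 :=
        mul_le_mul_of_nonneg_left (sum_sq_le_sum_sub_sq hg M) (sq_nonneg c)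
    _ = c ^ 2 * ∑ x, max (g x - M) 0 ^ 2 + c ^ 2 * ∑ x, max (M - g x) 0 ^ 2 := by
        simp only [← mul_add, ← sum_add_distrib, max_sub_zero_sq_add_max_sub_zero_sq]
    _ ≤ 4 * d * ∑ e : G.Dart, ((max (g e.fst - M) 0 - max (g e.snd - M) 0) ^ 2 +
          (max (M - g e.fst) 0 - max (M - g e.snd) 0) ^ 2) := by
        rw [sum_add_distrib, mul_add]
        exact add_le_add hupper hlower
    _ ≤ 4 * d * ∑ e : G.Dart, (g e.fst - g e.snd) ^ 2 :=
        mul_le_mul_of_nonneg_left (sum_le_sum fun e _ => sub_max_sub_zero_sq_add_le _ _ M)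
          (by positivity)

end SimpleGraph

open Classical in
/-- Corollary 3 of the paper: for an expander `(X_n)` of degree `d` and conductance
`c > 0` and a sequence of maps `f_n : X_n → ℓ²`, each `1`-Lipschitz with respect to
the graph metric and with `∑_{x∈X_n} f_n x = 0`, there is `R > 0` such that for
every `n` more than half of the vertices `x ∈ X_n` satisfy `‖f_n x‖ ≤ R`. -/
theorem expander_half_in_ball (d : ℕ) (c : ℝ) (hc : 0 < c) (E : Expander d c)
    (f : ∀ n : ℕ, E.V n → lp (fun _ : ℕ => ℝ) 2)
    (hlip : ∀ (n : ℕ) (x y : E.V n), ‖f n x - f n y‖ ≤ ((E.G n).dist x y : ℝ))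
    (hzero : ∀ n : ℕ, (∑ x : E.V n, f n x) = 0) :
    ∃ R : ℝ, 0 < R ∧ ∀ n : ℕ,
      (Fintype.card (E.V n) : ℝ) / 2 <
        ((Finset.univ.filter fun x : E.V n => ‖f n x‖ ≤ R).card : ℝ) := by
  set K : ℝ := 4 * d ^ 2 / c ^ 2
  refine ⟨√(2 * K + 1), by positivity, fun n => ?_⟩
  have : Nonempty (E.V n) := (E.connected n).nonempty
  have hreg := SimpleGraph.isRegularOfDegree_of_gdeg (E.regular n)
  have hpoincare := sum_norm_sq_le_of_forall_real (fun e : (E.G n).Dart => e.fst) (·.snd)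
    (fun g hg => SimpleGraph.HasExpansion.sq_mul_sum_sq_le (E.expansion n) hc.le hreg g hg)
    (f n) (hzero n)
  have hedges := SimpleGraph.sum_dart_norm_sub_sq_le hreg (f n) fun x y hxy => by
    simpa [SimpleGraph.dist_eq_one_iff_adj.mpr hxy] using hlip n x y
  have hsum : ∑ x, ‖f n x‖ ^ 2 ≤ K * Fintype.card (E.V n) := by
    rw [div_mul_eq_mul_div, le_div_iff₀ (by positivity)]
    linarith [mul_le_mul_of_nonneg_left hedges (by positivity : (0 : ℝ) ≤ 4 * d)]
  exact half_card_lt_card_filter_le _ (Real.sqrt_nonneg _)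
    (by rw [Real.sq_sqrt (by positivity)]; linarith) hsum
end

section
/- Let (X, d) be a metric space and let f : X × ℝ^N → ℝ^N be a continuous map (ℝ^N Euclidean) satisfying: (1) for every w ∈ ℝ^N, the map x ↦ f(x, w) is 1-Lipschitz; (2) for every x ∈ X, every continuous map g : ℝ^N → ℝ^N with sup_{w} ‖g(w) − f(x, w)‖ < ∞ attains the value 0 (i.e., there is w with g(w) = 0); (3) there is a function c : (0,∞) → ℝ such that for every r > 0 and every w ∈ ℝ^N, the set {x ∈ X : ‖f(x, w)‖ ≤ r} has diameter at most c(r). Then no expander admits a coarse quasi-embedding into X: there do not exist an expander (X_n), 1-Lipschitz maps ξ_n : X_n → X, and a function ρ as in the definition of coarse quasi-embedding. -/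
/-!
Average the maps `f (ξₙ v) ·` over the vertices `v` of `Xₙ`. The average stays at bounded
distance from `f (ξₙ v₀) ·`, so by (2) it vanishes at some `w`: the map `F v := f (ξₙ v) w`
has mean zero. By (1), `F` moves by at most `1` along edges, and the `L¹` Poincaré inequality
of the expander (the expansion of the sublevel sets of each coordinate of `F`, integrated over
the level) bounds the mean of `‖F u - F v‖`, hence of `‖F v‖`, by `K = N d / c`, independently
of `n`. By Markov's inequality more than half of the vertices satisfy `‖F v‖ ≤ 2K + 1`, and by
(3) their images lie in one ball of radius `c' (2K + 1) + 1`, which for large `n` contradicts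
`|ξₙ⁻¹ (B_r)| < ρ (r, |Xₙ|) = o(|Xₙ|)`.
-/

open Finset MeasureTheory Filter Topology

theorem PiLp.norm_le_sum_norm {p : ENNReal} [Fact (1 ≤ p)] {ι : Type*} [Fintype ι]
    {β : ι → Type*} [∀ i, SeminormedAddCommGroup (β i)] (x : PiLp p β) :
    ‖x‖ ≤ ∑ i, ‖x i‖ := by
  classical
  calc ‖x‖ = ‖∑ i, PiLp.single p i (x i)‖ := by
        congr 1; ext j; simp [WithLp.ofLp_sum, Finset.sum_apply]
    _ ≤ ∑ i, ‖x i‖ := (norm_sum_le _ _).trans_eq (by simp [PiLp.norm_single])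

theorem abs_sub_eq_posPart_add_posPart (a b : ℝ) : |a - b| = (b - a)⁺ + (a - b)⁺ := by
  rw [add_comm, ← posPart_add_negPart (a - b), negPart_def, neg_sub]; rfl

theorem integrable_indicator_Ico_one (a b : ℝ) :
    Integrable ((Set.Ico a b).indicator (1 : ℝ → ℝ)) :=
  (integrable_indicator_iff measurableSet_Ico).2 (integrableOn_const measure_Ico_lt_top.ne)

theorem integral_indicator_Ico_one (a b : ℝ) :
    ∫ t, (Set.Ico a b).indicator 1 t = (b - a)⁺ :=
  (integral_indicator_one measurableSet_Ico).trans Real.volume_real_Ico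

theorem card_mul_sum_norm_le_sum_sum_norm_sub {ι E : Type*} [Fintype ι] [NormedAddCommGroup E]
    [NormedSpace ℝ E] {F : ι → E} (hF : ∑ i, F i = 0) :
    Fintype.card ι * ∑ i, ‖F i‖ ≤ ∑ i, ∑ j, ‖F i - F j‖ := by
  rw [mul_sum]
  refine sum_le_sum fun i _ => ?_
  calc Fintype.card ι * ‖F i‖ = ‖∑ j, (F i - F j)‖ := by
        rw [sum_sub_distrib, hF, sub_zero, sum_const, card_univ, RCLike.norm_nsmul ℝ,
          nsmul_eq_mul]
    _ ≤ ∑ j, ‖F i - F j‖ := norm_sum_le _ _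

theorem card_filter_lt_mul_le_sum {ι : Type*} [Fintype ι] (g : ι → ℝ) (hg : ∀ i, 0 ≤ g i)
    (r : ℝ) : #{i | r < g i} * r ≤ ∑ i, g i := by
  calc #{i | r < g i} * r = #{i | r < g i} • r := (nsmul_eq_mul _ _).symm
    _ ≤ ∑ i with r < g i, g i := card_nsmul_le_sum _ _ _ fun i hi => (mem_filter.1 hi).2.le
    _ ≤ ∑ i, g i := sum_le_sum_of_subset_of_nonneg (subset_univ _) fun i _ _ => hg i

section LayerCake

variable {V : Type*} [Fintype V] (w : V → V → ℝ) (φ : V → ℝ)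

theorem integrable_sum_sum_mul_indicator_Ico :
    Integrable fun t => ∑ u, ∑ v, w u v * (Set.Ico (φ u) (φ v)).indicator 1 t :=
  integrable_finsetSum _ fun _ _ => integrable_finsetSum _ fun _ _ =>
    (integrable_indicator_Ico_one _ _).const_mul _

theorem sum_sum_mul_posPart_sub_eq_integral :
    ∑ u, ∑ v, w u v * (φ v - φ u)⁺ =
      ∫ t, ∑ u, ∑ v, w u v * (Set.Ico (φ u) (φ v)).indicator 1 t := by
  have hint : ∀ u v, Integrable fun t => w u v * (Set.Ico (φ u) (φ v)).indicator 1 t :=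
    fun u v => (integrable_indicator_Ico_one _ _).const_mul _
  rw [integral_finsetSum _ fun u _ => integrable_finsetSum _ fun v _ => hint u v]
  refine sum_congr rfl fun u _ => ?_
  rw [integral_finsetSum _ fun v _ => hint u v]
  simp only [integral_const_mul, integral_indicator_Ico_one]

theorem sum_sum_mul_indicator_Ico_eq_sum_product [DecidableEq V] (t : ℝ) :
    ∑ u, ∑ v, w u v * (Set.Ico (φ u) (φ v)).indicator 1 t =
      ∑ p ∈ ({v | φ v ≤ t} : Finset V) ×ˢ ({v | φ v ≤ t} : Finset V)ᶜ, w p.1 p.2 := by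
  simp [sum_product, Set.indicator_apply, sum_filter, ite_and]

end LayerCake

section Expansion

open scoped Classical

variable {V : Type*} [Fintype V] {G : SimpleGraph V} {c : ℝ}

def HasExpansion (G : SimpleGraph V) (c : ℝ) : Prop :=
  ∀ A : Finset V, (#A : ℝ) ≤ Fintype.card V / 2 → c * #A ≤ #(graphBoundary G A)

theorem Expander.hasExpansion {d : ℕ} {c : ℝ} (E : Expander d c) (n : ℕ) :
    HasExpansion (E.G n) c :=
  E.expansion n

theorem card_graphBoundary_le_card_interedges (G : SimpleGraph V) (A : Finset V) :
    #(graphBoundary G A) ≤ #(G.interedges A Aᶜ) := by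
  refine (card_le_card fun x hx => ?_).trans (card_image_le (f := Prod.snd))
  obtain ⟨hxA, a, haA, hax⟩ := by simpa [graphBoundary] using hx
  exact mem_image.2 ⟨(a, x), by simp [SimpleGraph.mem_interedges_iff, haA, hxA, hax.symm], rfl⟩

theorem HasExpansion.mul_card_le_card_interedges (hG : HasExpansion G c) {A : Finset V}
    (hA : (#A : ℝ) ≤ Fintype.card V / 2) : c * #A ≤ #(G.interedges A Aᶜ) :=
  (hG A hA).trans (by exact_mod_cast card_graphBoundary_le_card_interedges G A)

theorem HasExpansion.mul_card_mul_card_compl_le (hG : HasExpansion G c) (A : Finset V) :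
    c * (#A * #Aᶜ) ≤ Fintype.card V * #(G.interedges A Aᶜ) := by
  have hsum : (#A : ℝ) + #Aᶜ = Fintype.card V := by exact_mod_cast card_add_card_compl A
  have hcompl : #(G.interedges Aᶜ Aᶜᶜ) = #(G.interedges A Aᶜ) := by
    have : Std.Symm G.Adj := ⟨fun _ _ h => h.symm⟩
    rw [compl_compl]
    exact Rel.card_interedges_comm _ _
  rcases le_total (#A : ℝ) (Fintype.card V / 2) with hA | hA
  · have := hG.mul_card_le_card_interedges hA
    nlinarith [Nat.cast_nonneg (α := ℝ) #Aᶜ]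
  · have := hG.mul_card_le_card_interedges (A := Aᶜ) (by linarith)
    rw [hcompl] at this
    nlinarith [Nat.cast_nonneg (α := ℝ) #A]

omit [Fintype V] in
theorem sum_product_adj_eq_card_interedges (G : SimpleGraph V) (s t : Finset V) :
    ∑ p ∈ s ×ˢ t, (if G.Adj p.1 p.2 then 1 else 0 : ℝ) = #(G.interedges s t) := by
  rw [sum_boole, SimpleGraph.interedges_def]

-- Co-area formula: integrate over `t` the cut inequality for the sublevel set `{φ ≤ t}`.
theorem HasExpansion.mul_sum_sum_posPart_sub_le (hG : HasExpansion G c) (φ : V → ℝ) :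
    c * ∑ u, ∑ v, (φ v - φ u)⁺ ≤
      Fintype.card V * ∑ u, ∑ v ∈ G.neighborFinset u, (φ v - φ u)⁺ := by
  have h := integral_mono (integrable_sum_sum_mul_indicator_Ico (fun _ _ => c) φ)
    ((integrable_sum_sum_mul_indicator_Ico (fun u v => if G.Adj u v then 1 else 0) φ).const_mul
      (Fintype.card V))
    fun t => by
      simp only [sum_sum_mul_indicator_Ico_eq_sum_product, sum_const, card_product,
        sum_product_adj_eq_card_interedges, nsmul_eq_mul, Nat.cast_mul]
      linarith [hG.mul_card_mul_card_compl_le {v | φ v ≤ t}]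
  rw [integral_const_mul, ← sum_sum_mul_posPart_sub_eq_integral,
    ← sum_sum_mul_posPart_sub_eq_integral] at h
  simpa only [mul_sum, SimpleGraph.neighborFinset_eq_filter, sum_filter, ite_mul, one_mul,
    zero_mul] using h

theorem HasExpansion.mul_sum_sum_abs_sub_le (hG : HasExpansion G c) (φ : V → ℝ) :
    c * ∑ u, ∑ v, |φ u - φ v| ≤
      Fintype.card V * ∑ u, ∑ v ∈ G.neighborFinset u, |φ u - φ v| := by
  have h₁ := hG.mul_sum_sum_posPart_sub_le φ
  have h₂ := hG.mul_sum_sum_posPart_sub_le (-φ)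
  simp only [Pi.neg_apply, neg_sub_neg] at h₂
  simp only [abs_sub_eq_posPart_add_posPart, sum_add_distrib, mul_add]
  linarith

theorem HasExpansion.mul_sum_sum_norm_sub_le {ι : Type*} [Fintype ι] {p : ENNReal}
    [Fact (1 ≤ p)] (hG : HasExpansion G c) (hc : 0 ≤ c) (F : V → PiLp p fun _ : ι => ℝ) :
    c * ∑ u, ∑ v, ‖F u - F v‖ ≤
      Fintype.card ι * Fintype.card V * ∑ u, ∑ v ∈ G.neighborFinset u, ‖F u - F v‖ := by
  calc c * ∑ u, ∑ v, ‖F u - F v‖ ≤ ∑ i, c * ∑ u, ∑ v, |F u i - F v i| := by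
        rw [← mul_sum]
        gcongr
        refine (sum_le_sum fun u _ => sum_le_sum fun v _ => ?_).trans_eq
          ((sum_congr rfl fun _ _ => sum_comm).trans sum_comm)
        exact (PiLp.norm_le_sum_norm _).trans_eq (by simp [Real.norm_eq_abs])
    _ ≤ ∑ _i : ι, Fintype.card V * ∑ u, ∑ v ∈ G.neighborFinset u, ‖F u - F v‖ := by
        refine sum_le_sum fun i _ => (hG.mul_sum_sum_abs_sub_le fun v => F v i).trans ?_
        gcongr with u _ v
        exact (PiLp.norm_apply_le (F _ - F _) i).trans_eq' (by simp [Real.norm_eq_abs])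
    _ = _ := by rw [sum_const, card_univ, nsmul_eq_mul, mul_assoc]

theorem sum_sum_neighborFinset_norm_sub_le {E : Type*} [SeminormedAddCommGroup E] {d : ℕ}
    (hdeg : ∀ v, gdeg G v ≤ d) {F : V → E} (hF : ∀ u v, G.Adj u v → ‖F u - F v‖ ≤ 1) :
    ∑ u, ∑ v ∈ G.neighborFinset u, ‖F u - F v‖ ≤ Fintype.card V * d := by
  calc ∑ u, ∑ v ∈ G.neighborFinset u, ‖F u - F v‖ ≤ ∑ _u : V, (d : ℝ) := by
        refine sum_le_sum fun u _ => ?_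
        calc ∑ v ∈ G.neighborFinset u, ‖F u - F v‖ ≤ ∑ v ∈ G.neighborFinset u, 1 :=
              sum_le_sum fun v hv => hF u v ((G.mem_neighborFinset u v).1 hv)
          _ = gdeg G u := by simp [gdeg, SimpleGraph.neighborFinset_eq_filter]
          _ ≤ d := by exact_mod_cast hdeg u
    _ = Fintype.card V * d := by simp

end Expansion

theorem HasExpansion.card_lt_two_mul_card_norm_le {V ι : Type*} [Fintype V] [Nonempty V]
    [Fintype ι] {p : ENNReal} [Fact (1 ≤ p)] {G : SimpleGraph V} {c : ℝ} {d : ℕ}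
    (hG : HasExpansion G c) (hc : 0 < c) (hdeg : ∀ v, gdeg G v ≤ d)
    {F : V → PiLp p fun _ : ι => ℝ} (hF : ∀ u v, G.Adj u v → ‖F u - F v‖ ≤ 1)
    (hF₀ : ∑ v, F v = 0) :
    (Fintype.card V : ℝ) < 2 * #{v | ‖F v‖ ≤ 2 * (Fintype.card ι * d / c) + 1} := by
  set K : ℝ := Fintype.card ι * d / c
  set n : ℝ := (Fintype.card V : ℝ)
  have hn : 0 < n := by simp [n, Fintype.card_pos]
  have hK : 0 ≤ K := by positivity
  have hpairs : ∑ u, ∑ v, ‖F u - F v‖ ≤ K * n * n := by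
    have h := (hG.mul_sum_sum_norm_sub_le hc.le F).trans
      (mul_le_mul_of_nonneg_left (sum_sum_neighborFinset_norm_sub_le hdeg hF) (by positivity))
    calc ∑ u, ∑ v, ‖F u - F v‖ = (c * ∑ u, ∑ v, ‖F u - F v‖) / c := by field_simp
      _ ≤ Fintype.card ι * n * (n * d) / c := div_le_div_of_nonneg_right h hc.le
      _ = K * n * n := by ring
  have hnorms : ∑ v, ‖F v‖ ≤ K * n := by
    have := card_mul_sum_norm_le_sum_sum_norm_sub hF₀
    nlinarith
  have hfar := card_filter_lt_mul_le_sum (fun v => ‖F v‖) (fun v => norm_nonneg _) (2 * K + 1)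
  have hsplit : (#{v | ‖F v‖ ≤ 2 * K + 1} : ℝ) + #{v | 2 * K + 1 < ‖F v‖} = n := by
    simp_rw [← not_le]
    rw [← Nat.cast_add, card_filter_add_card_filter_not, card_univ]
  nlinarith

theorem exists_sum_apply_eq_zero {X W E ι : Type*} [PseudoMetricSpace X]
    [TopologicalSpace W] [NormedAddCommGroup E] [NormedSpace ℝ E] [Fintype ι] [Nonempty ι]
    {f : X → W → E} (hcont : ∀ x, Continuous (f x)) (hlip : ∀ w, LipschitzWith 1 fun x => f x w)
    (hzero : ∀ (x : X) (g : W → E), Continuous g → (∃ C : ℝ, ∀ w, ‖g w - f x w‖ ≤ C) →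
      ∃ w, g w = 0)
    (q : ι → X) : ∃ w, ∑ i, f (q i) w = 0 := by
  obtain ⟨i₀⟩ := ‹Nonempty ι›
  set n : ℝ := (Fintype.card ι : ℝ)
  have hn : n ≠ 0 := by simp [n, Fintype.card_ne_zero]
  have hclose : ∀ w, ‖n⁻¹ • ∑ i, f (q i) w - f (q i₀) w‖ ≤ n⁻¹ * ∑ i, dist (q i) (q i₀) := by
    intro w
    calc ‖n⁻¹ • ∑ i, f (q i) w - f (q i₀) w‖ = ‖n⁻¹ • ∑ i, (f (q i) w - f (q i₀) w)‖ := by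
          rw [sum_sub_distrib, smul_sub, sum_const, card_univ, ← Nat.cast_smul_eq_nsmul ℝ,
            smul_smul, inv_mul_cancel₀ hn, one_smul]
      _ ≤ n⁻¹ * ∑ i, dist (q i) (q i₀) := by
          rw [norm_smul, Real.norm_of_nonneg (by positivity)]
          gcongr
          refine (norm_sum_le _ _).trans (sum_le_sum fun i _ => ?_)
          simpa [dist_eq_norm] using (hlip w).dist_le_mul (q i) (q i₀)
  obtain ⟨w, hw⟩ := hzero (q i₀) (fun w => n⁻¹ • ∑ i, f (q i) w)
    (continuous_const.smul (continuous_finsetSum _ fun i _ => hcont (q i))) ⟨_, hclose⟩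
  exact ⟨w, by simpa [hn] using hw⟩

theorem exists_lt_half_of_tendsto_div_zero {ρ : ℝ → ℝ}
    (hρ : Tendsto (fun t => ρ t / t) atTop (𝓝 0)) {m : ℕ → ℕ} (hm : Tendsto m atTop atTop) :
    ∃ n, 0 < (m n : ℝ) ∧ ρ (m n) < m n / 2 := by
  have hm' := (tendsto_natCast_atTop_atTop (R := ℝ)).comp hm
  obtain ⟨n, hpos, hlt⟩ := ((hm'.eventually_gt_atTop 0).and
    (hm'.eventually (hρ.eventually (gt_mem_nhds one_half_pos)))).exists
  refine ⟨n, hpos, ?_⟩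
  rw [Function.comp_apply] at hpos hlt
  rw [div_lt_iff₀ hpos] at hlt
  linarith

open Classical in
/-- Lemma 3 of the paper: let `(X, d)` be a metric space and `f : X × ℝ^N → ℝ^N` a
continuous map such that (1) `x ↦ f (x, w)` is `1`-Lipschitz for every `w`;
(2) for every `x`, every continuous map `g : ℝ^N → ℝ^N` at finite uniform distance
from `w ↦ f (x, w)` attains the value `0`; and (3) there is a function `c'` such
that for every `r > 0` and every `w`, the set `{x : ‖f (x, w)‖ ≤ r}` has diameter
at most `c' r`. Then no expander admits a coarse quasi-embedding into `X`:
there is no expander `(X_n)` together with `1`-Lipschitz maps `ξ_n : X_n → X`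
and a positive function `ρ` with `ρ(r,t)/t → 0` as `t → ∞` for every `r`, such
that `|ξ_n⁻¹(B_r(x))| < ρ(r, |X_n|)` for all `n`, `x ∈ X` and `r > 0`. -/
theorem no_expander_quasi_embeds
    {X : Type*} [MetricSpace X] {N : ℕ}
    (f : X → EuclideanSpace ℝ (Fin N) → EuclideanSpace ℝ (Fin N))
    (hcont : Continuous fun q : X × EuclideanSpace ℝ (Fin N) => f q.1 q.2)
    (h1 : ∀ w : EuclideanSpace ℝ (Fin N), LipschitzWith 1 fun x => f x w)
    (h2 : ∀ (x : X) (g : EuclideanSpace ℝ (Fin N) → EuclideanSpace ℝ (Fin N)),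
      Continuous g → (∃ C : ℝ, ∀ w, ‖g w - f x w‖ ≤ C) → ∃ w, g w = 0)
    (c' : ℝ → ℝ)
    (h3 : ∀ r : ℝ, 0 < r → ∀ (w : EuclideanSpace ℝ (Fin N)) (x x' : X),
      ‖f x w‖ ≤ r → ‖f x' w‖ ≤ r → dist x x' ≤ c' r) :
    ¬ ∃ (d : ℕ) (c : ℝ) (_ : 0 < c) (E : Expander d c)
        (ξ : ∀ n : ℕ, E.V n → X)
        (_ : ∀ (n : ℕ) (x y : E.V n), dist (ξ n x) (ξ n y) ≤ ((E.G n).dist x y : ℝ))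
        (ρ : ℝ → ℝ → ℝ),
        (∀ r t : ℝ, 0 < r → 0 < t → 0 < ρ r t) ∧
        (∀ r : ℝ, Filter.Tendsto (fun t : ℝ => ρ r t / t) Filter.atTop (nhds 0)) ∧
        (∀ (n : ℕ) (x : X) (r : ℝ), 0 < r →
          ((Finset.univ.filter fun v : E.V n => dist (ξ n v) x < r).card : ℝ) <
            ρ r (Fintype.card (E.V n))) := by
  rintro ⟨d, c, hc, E, ξ, hξ, ρ, -, hρ, hcount⟩
  set R : ℝ := 2 * (Fintype.card (Fin N) * d / c) + 1
  have hR : 0 < R := by positivity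
  obtain ⟨n, hn, hρn⟩ := exists_lt_half_of_tendsto_div_zero (hρ (c' R + 1)) E.card_tendsto
  have : Nonempty (E.V n) := Fintype.card_pos_iff.1 (by exact_mod_cast hn)
  obtain ⟨w, hw⟩ := exists_sum_apply_eq_zero (f := f)
    (fun x => hcont.comp (.prodMk_right x)) h1 h2 (ξ n)
  have hedge : ∀ u v, (E.G n).Adj u v → ‖f (ξ n u) w - f (ξ n v) w‖ ≤ 1 := fun u v huv =>
    calc ‖f (ξ n u) w - f (ξ n v) w‖ ≤ dist (ξ n u) (ξ n v) := by
          simpa [dist_eq_norm] using (h1 w).dist_le_mul (ξ n u) (ξ n v)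
      _ ≤ 1 := by simpa [SimpleGraph.dist_eq_one_iff_adj.2 huv] using hξ n u v
  set S : Finset (E.V n) := {v | ‖f (ξ n v) w‖ ≤ R}
  have hnear : (Fintype.card (E.V n) : ℝ) < 2 * #S :=
    (E.hasExpansion n).card_lt_two_mul_card_norm_le hc (fun v => (E.regular n v).le) hedge hw
  obtain ⟨u₀, hu₀⟩ : S.Nonempty := card_pos.1 (by exact_mod_cast (by linarith : (0 : ℝ) < #S))
  replace hu₀ : ‖f (ξ n u₀) w‖ ≤ R := (mem_filter.1 hu₀).2
  have hball : (#S : ℝ) ≤ #{v | dist (ξ n v) (ξ n u₀) < c' R + 1} := by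
    exact_mod_cast card_le_card fun v hv => mem_filter.2 ⟨mem_univ v, by
      linarith [h3 R hR w _ _ (mem_filter.1 hv).2 hu₀]⟩
  have hc'R : 0 ≤ c' R := by simpa using h3 R hR w _ _ hu₀ hu₀
  linarith [hcount n (ξ n u₀) (c' R + 1) (by linarith)]
end
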